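/- Let 1 < q ≤ p < ∞ and let X = f_{p,q} be the space of sequences x = (x_I) indexed by dyadic rectangles with norm ‖x‖ = ‖(Σ_I |x_I 𝟙_{I,p}|^q)^{1/q}‖_{L^p}, where 𝟙_{I,p} = |I|^{−1/p} 𝟙_I. If x₀, x₁, x₂, … ∈ X have pairwise disjoint supports, then ‖Σ_n x_n‖ ≤ (Σ_n ‖x_n‖^q)^{1/q}. -/

import Mathlib

/-
For `r = p / q ≥ 1` the quantity `‖x‖^q` is the `L^r` norm of `u ↦ S_q x (u)^q`. If the `x_n`
have disjoint supports, then for every rectangle at most one `x_n` contributes, so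
`S_q (Σ x_n)^q = Σ_n S_q (x_n)^q` pointwise, and Minkowski's inequality in `L^r` for this
countable sum gives `‖Σ x_n‖^q ≤ Σ_n ‖x_n‖^q`.
-/

open MeasureTheory

/-- A dyadic rectangle `I = I₁ × … × I_d ⊆ [0,1]^d`, where
`I_i = 2^{-j_i}(k_i + [0,1))` with `k_i < 2^{j_i}`. -/
structure DyadicRect (d : ℕ) where
  j : Fin d → ℕ
  k : Fin d → ℕ
  hk : ∀ i, k i < 2 ^ j i

namespace DyadicRect

/-- The rectangle as a subset of `ℝ^d`. -/
def toSet {d : ℕ} (I : DyadicRect d) : Set (Fin d → ℝ) :=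
  {u | ∀ i, (I.k i : ℝ) / 2 ^ I.j i ≤ u i ∧ u i < ((I.k i : ℝ) + 1) / 2 ^ I.j i}

/-- The volume `|I| = ∏ 2^{-j_i}`. -/
noncomputable def vol {d : ℕ} (I : DyadicRect d) : ℝ := ∏ i, ((2 : ℝ) ^ I.j i)⁻¹

/-- The `L^p`-normalized indicator `𝟙_{I,p} = |I|^{-1/p} 𝟙_I`. -/
noncomputable def indp {d : ℕ} (p : ℝ) (I : DyadicRect d) (u : Fin d → ℝ) : ℝ :=
  I.vol ^ (-(1 / p)) * I.toSet.indicator (fun _ => (1 : ℝ)) u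

end DyadicRect

/-- The square-type function `S_q x (u) = (Σ_I |x_I 𝟙_{I,p}(u)|^q)^{1/q}`. -/
noncomputable def Sq {d : ℕ} {𝕜 : Type*} [RCLike 𝕜] (p q : ℝ)
    (x : DyadicRect d → 𝕜) (u : Fin d → ℝ) : ℝ :=
  (∑' I, (‖x I‖ * DyadicRect.indp p I u) ^ q) ^ (1 / q)

/-- The `f_{p,q}` norm `‖x‖ = ‖S_q x‖_{L^p}`. -/
noncomputable def fpqNorm {d : ℕ} {𝕜 : Type*} [RCLike 𝕜] (p q : ℝ)
    (x : DyadicRect d → 𝕜) : ℝ :=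
  (∫ u, Sq p q x u ^ p) ^ (1 / p)

open Function
open scoped ENNReal

theorem tsum_comp_of_support_subsingleton {ι M N : Type*} [AddCommMonoid M] [TopologicalSpace M]
    [AddCommMonoid N] [TopologicalSpace N] {f : ι → M} (hf : (support f).Subsingleton)
    (φ : M → N) (hφ : φ 0 = 0) : φ (∑' i, f i) = ∑' i, φ (f i) := by
  rcases hf.eq_empty_or_singleton with hempty | ⟨m, hm⟩
  · simp [support_eq_empty_iff.1 hempty, hφ]
  · have hzero : ∀ n, n ≠ m → f n = 0 := fun n hn =>
      notMem_support.1 (by rw [hm]; exact hn)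
    rw [tsum_eq_single m hzero, tsum_eq_single m fun n hn => by rw [hzero n hn, hφ]]

theorem ENNReal.ofReal_rpow_eq_ofReal_rpow_rpow_div {a : ℝ} (ha : 0 ≤ a) {p q : ℝ} (hq : q ≠ 0)
    (hpq : 0 ≤ p / q) : ENNReal.ofReal (a ^ p) = ENNReal.ofReal (a ^ q) ^ (p / q) := by
  rw [ENNReal.ofReal_rpow_of_nonneg (Real.rpow_nonneg ha q) hpq, ← Real.rpow_mul ha,
    mul_div_cancel₀ p hq]

section Minkowski

variable {α : Type*} [MeasurableSpace α] {μ : Measure α} {r : ℝ}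

theorem eLpNorm'_iSup_of_monotone {f : ℕ → α → ℝ≥0∞} (hf : ∀ n, AEMeasurable (f n) μ)
    (hmono : ∀ a, Monotone fun n => f n a) (hr : 0 < r) :
    eLpNorm' (fun a => ⨆ n, f n a) r μ = ⨆ n, eLpNorm' (f n) r μ := by
  simp only [eLpNorm', enorm_eq_self]
  have hpow : ∀ a, (⨆ n, f n a) ^ r = ⨆ n, f n a ^ r := fun a =>
    (ENNReal.orderIsoRpow r hr).map_iSup _
  simp_rw [hpow]
  rw [lintegral_iSup' (fun n => (hf n).pow_const r)
    (ae_of_all _ fun a _ _ hmn => ENNReal.rpow_le_rpow (hmono a hmn) hr.le)]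
  exact (ENNReal.orderIsoRpow (1 / r) (one_div_pos.2 hr)).map_iSup _

theorem eLpNorm'_tsum_le {g : ℕ → α → ℝ≥0∞} (hg : ∀ n, AEMeasurable (g n) μ) (hr : 1 ≤ r) :
    eLpNorm' (fun a => ∑' n, g n a) r μ ≤ ∑' n, eLpNorm' (g n) r μ := by
  simp_rw [ENNReal.tsum_eq_iSup_nat]
  rw [eLpNorm'_iSup_of_monotone (f := fun N a => ∑ n ∈ Finset.range N, g n a)
    (fun N => Finset.aemeasurable_fun_sum _ fun n _ => hg n)
    (fun a _ _ hMN => Finset.sum_le_sum_of_subset (Finset.range_subset_range.2 hMN))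
    (one_pos.trans_le hr)]
  refine iSup_le fun N => ?_
  calc eLpNorm' (fun a => ∑ n ∈ Finset.range N, g n a) r μ
      = eLpNorm' (∑ n ∈ Finset.range N, g n) r μ := by simp only [Finset.sum_fn]
    _ ≤ ∑ n ∈ Finset.range N, eLpNorm' (g n) r μ :=
      eLpNorm'_sum_le (fun n _ => (hg n).aestronglyMeasurable) hr
    _ ≤ ⨆ M, ∑ n ∈ Finset.range M, eLpNorm' (g n) r μ :=
      le_iSup (fun M => ∑ n ∈ Finset.range M, eLpNorm' (g n) r μ) N

end Minkowski

namespace DyadicRect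

variable {d : ℕ}

instance : Countable (DyadicRect d) :=
  Injective.countable (f := fun I : DyadicRect d => (I.j, I.k)) fun ⟨_, _, _⟩ ⟨_, _, _⟩ h => by
    obtain ⟨rfl, rfl⟩ := Prod.mk.inj h
    rfl

theorem measurableSet_toSet (I : DyadicRect d) : MeasurableSet I.toSet := by
  unfold toSet
  measurability

theorem indp_nonneg (p : ℝ) (I : DyadicRect d) (u : Fin d → ℝ) : 0 ≤ I.indp p u :=
  mul_nonneg (Real.rpow_nonneg (Finset.prod_nonneg fun _ _ => by positivity) _)
    (Set.indicator_nonneg (fun _ _ => zero_le_one) u)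

theorem measurable_indp (p : ℝ) (I : DyadicRect d) : Measurable (I.indp p) :=
  measurable_const.mul (measurable_const.indicator I.measurableSet_toSet)

end DyadicRect

section SquareFunction

variable {d : ℕ} {𝕜 : Type*} [RCLike 𝕜] {p q : ℝ}

/-- `S_q x (u) ^ q` computed in `ℝ≥0∞`: where the series diverges it is `∞`, whereas `Sq` takes
the junk value `0`. -/
noncomputable def ennrealSqPow (p q : ℝ) (x : DyadicRect d → 𝕜) (u : Fin d → ℝ) : ℝ≥0∞ :=
  ∑' I, ENNReal.ofReal ((‖x I‖ * DyadicRect.indp p I u) ^ q)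

theorem Sq_term_nonneg (p q : ℝ) (x : DyadicRect d → 𝕜) (u : Fin d → ℝ) (I : DyadicRect d) :
    0 ≤ (‖x I‖ * DyadicRect.indp p I u) ^ q :=
  Real.rpow_nonneg (mul_nonneg (norm_nonneg _) (I.indp_nonneg p u)) q

theorem Sq_nonneg (p q : ℝ) (x : DyadicRect d → 𝕜) (u : Fin d → ℝ) : 0 ≤ Sq p q x u :=
  Real.rpow_nonneg (tsum_nonneg (Sq_term_nonneg p q x u)) _

theorem fpqNorm_nonneg (p q : ℝ) (x : DyadicRect d → 𝕜) : 0 ≤ fpqNorm p q x :=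
  Real.rpow_nonneg (integral_nonneg fun u => Real.rpow_nonneg (Sq_nonneg p q x u) p) _

theorem measurable_ennrealSqPow (p q : ℝ) (x : DyadicRect d → 𝕜) :
    Measurable (ennrealSqPow p q x) :=
  Measurable.tsum fun I =>
    ((measurable_const.mul (I.measurable_indp p)).pow_const q).ennreal_ofReal

theorem Sq_rpow_eq_toReal_ennrealSqPow (hq : q ≠ 0) (x : DyadicRect d → 𝕜) (u : Fin d → ℝ) :
    Sq p q x u ^ q = (ennrealSqPow p q x u).toReal := by
  rw [Sq, ← Real.rpow_mul (tsum_nonneg (Sq_term_nonneg p q x u)), one_div_mul_cancel hq,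
    Real.rpow_one, ennrealSqPow, ENNReal.tsum_toReal_eq fun _ => ENNReal.ofReal_ne_top]
  exact tsum_congr fun I => (ENNReal.toReal_ofReal (Sq_term_nonneg p q x u I)).symm

theorem ofReal_Sq_rpow_le (hq : 0 < q) (hp : 0 ≤ p) (x : DyadicRect d → 𝕜) (u : Fin d → ℝ) :
    ENNReal.ofReal (Sq p q x u ^ p) ≤ ennrealSqPow p q x u ^ (p / q) := by
  have hpq : 0 ≤ p / q := div_nonneg hp hq.le
  rw [ENNReal.ofReal_rpow_eq_ofReal_rpow_rpow_div (Sq_nonneg p q x u) hq.ne' hpq,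
    Sq_rpow_eq_toReal_ennrealSqPow hq.ne']
  exact ENNReal.rpow_le_rpow ENNReal.ofReal_toReal_le hpq

theorem ofReal_Sq_rpow_eq (hq : 0 < q) (hp : 0 ≤ p) {x : DyadicRect d → 𝕜} {u : Fin d → ℝ}
    (hx : Summable fun I => (‖x I‖ * DyadicRect.indp p I u) ^ q) :
    ENNReal.ofReal (Sq p q x u ^ p) = ennrealSqPow p q x u ^ (p / q) := by
  have hfin : ennrealSqPow p q x u ≠ ∞ := by
    rw [ennrealSqPow, ← ENNReal.ofReal_tsum_of_nonneg (Sq_term_nonneg p q x u) hx]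
    exact ENNReal.ofReal_ne_top
  rw [ENNReal.ofReal_rpow_eq_ofReal_rpow_rpow_div (Sq_nonneg p q x u) hq.ne'
    (div_nonneg hp hq.le),
    Sq_rpow_eq_toReal_ennrealSqPow hq.ne', ENNReal.ofReal_toReal hfin]

theorem ofReal_fpqNorm_rpow (hq : 0 < q) (hp : 0 ≤ p) (x : DyadicRect d → 𝕜) :
    ENNReal.ofReal (fpqNorm p q x ^ q) = ENNReal.ofReal (∫ u, Sq p q x u ^ p) ^ (q / p) := by
  have hint : 0 ≤ ∫ u, Sq p q x u ^ p :=
    integral_nonneg fun u => Real.rpow_nonneg (Sq_nonneg p q x u) p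
  rw [fpqNorm, ← Real.rpow_mul hint, one_div_mul_eq_div,
    ENNReal.ofReal_rpow_of_nonneg hint (div_nonneg hq.le hp)]

theorem ofReal_fpqNorm_rpow_le_eLpNorm' (hq : 0 < q) (hp : 0 ≤ p) (x : DyadicRect d → 𝕜) :
    ENNReal.ofReal (fpqNorm p q x ^ q) ≤ eLpNorm' (ennrealSqPow p q x) (p / q) volume := by
  have hSq : ∀ u, 0 ≤ Sq p q x u ^ p := fun u => Real.rpow_nonneg (Sq_nonneg p q x u) p
  have hqp0 : 0 ≤ q / p := div_nonneg hq.le hp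
  calc ENNReal.ofReal (fpqNorm p q x ^ q)
      = ‖(∫ u, Sq p q x u ^ p : ℝ)‖ₑ ^ (q / p) := by
        rw [ofReal_fpqNorm_rpow hq hp, Real.enorm_of_nonneg (integral_nonneg hSq)]
    _ ≤ (∫⁻ u, ‖Sq p q x u ^ p‖ₑ) ^ (q / p) :=
        ENNReal.rpow_le_rpow (enorm_integral_le_lintegral_enorm _) hqp0
    _ = (∫⁻ u, ENNReal.ofReal (Sq p q x u ^ p)) ^ (q / p) := by
        simp only [Real.enorm_of_nonneg, hSq]
    _ ≤ (∫⁻ u, ennrealSqPow p q x u ^ (p / q)) ^ (q / p) :=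
        ENNReal.rpow_le_rpow (lintegral_mono fun u => ofReal_Sq_rpow_le hq hp x u) hqp0
    _ = eLpNorm' (ennrealSqPow p q x) (p / q) volume := by
        simp only [eLpNorm', enorm_eq_self, one_div_div]

theorem ofReal_fpqNorm_rpow_eq_eLpNorm' (hq : 0 < q) (hp : 0 ≤ p) {x : DyadicRect d → 𝕜}
    (hx : ∀ u, Summable fun I => (‖x I‖ * DyadicRect.indp p I u) ^ q)
    (hint : Integrable fun u => Sq p q x u ^ p) :
    ENNReal.ofReal (fpqNorm p q x ^ q) = eLpNorm' (ennrealSqPow p q x) (p / q) volume := by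
  rw [ofReal_fpqNorm_rpow hq hp, ofReal_integral_eq_lintegral_ofReal hint
    (ae_of_all _ fun u => Real.rpow_nonneg (Sq_nonneg p q x u) p)]
  simp only [eLpNorm', enorm_eq_self, one_div_div, ofReal_Sq_rpow_eq hq hp (hx _)]

theorem ennrealSqPow_tsum_of_support_subsingleton (hq : q ≠ 0) {ι : Type*}
    {x : ι → DyadicRect d → 𝕜} (hx : ∀ I, (support fun n => x n I).Subsingleton)
    (u : Fin d → ℝ) :
    ennrealSqPow p q (fun I => ∑' n, x n I) u = ∑' n, ennrealSqPow p q (x n) u := by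
  calc ennrealSqPow p q (fun I => ∑' n, x n I) u
      = ∑' I, ∑' n, ENNReal.ofReal ((‖x n I‖ * DyadicRect.indp p I u) ^ q) :=
        tsum_congr fun I => tsum_comp_of_support_subsingleton (hx I)
          (fun a => ENNReal.ofReal ((‖a‖ * DyadicRect.indp p I u) ^ q))
          (by simp [Real.zero_rpow hq])
    _ = ∑' n, ennrealSqPow p q (x n) u := ENNReal.tsum_comm

end SquareFunction

/-- For `1 < q ≤ p < ∞`: if `x₀, x₁, x₂, …` in `f_{p,q}` have pairwise disjoint
supports, then `‖Σ_n x_n‖ ≤ (Σ_n ‖x_n‖^q)^{1/q}`. -/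
theorem stmt_10 {d : ℕ} (p q : ℝ) (hq : 1 < q) (hqp : q ≤ p)
    (x : ℕ → DyadicRect d → ℝ)
    (hdisj : ∀ m n, m ≠ n → ∀ I, x m I = 0 ∨ x n I = 0)
    (hmem1 : ∀ n u, Summable fun I => (‖x n I‖ * DyadicRect.indp p I u) ^ q)
    (hmem2 : ∀ n, MeasureTheory.Integrable fun u => Sq p q (x n) u ^ p)
    (hsum : Summable fun n => fpqNorm p q (x n) ^ q) :
    fpqNorm p q (fun I => ∑' n, x n I) ≤ (∑' n, fpqNorm p q (x n) ^ q) ^ (1 / q) := by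
  have hq0 : 0 < q := one_pos.trans hq
  have hp0 : 0 ≤ p := hq0.le.trans hqp
  have hsupp : ∀ I, (support fun n => x n I).Subsingleton := fun I m hm n hn => by
    by_contra hmn
    exact (hdisj m n hmn I).elim hm hn
  have hterm : ∀ n, 0 ≤ fpqNorm p q (x n) ^ q := fun n =>
    Real.rpow_nonneg (fpqNorm_nonneg p q (x n)) q
  rw [one_div, Real.le_rpow_inv_iff_of_pos (fpqNorm_nonneg p q _) (tsum_nonneg hterm) hq0,
    ← ENNReal.ofReal_le_ofReal_iff (tsum_nonneg hterm), ENNReal.ofReal_tsum_of_nonneg hterm hsum]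
  calc ENNReal.ofReal (fpqNorm p q (fun I => ∑' n, x n I) ^ q)
      ≤ eLpNorm' (ennrealSqPow p q fun I => ∑' n, x n I) (p / q) volume :=
        ofReal_fpqNorm_rpow_le_eLpNorm' hq0 hp0 _
    _ = eLpNorm' (fun u => ∑' n, ennrealSqPow p q (x n) u) (p / q) volume := by
        congr 1
        exact funext (ennrealSqPow_tsum_of_support_subsingleton hq0.ne' hsupp)
    _ ≤ ∑' n, eLpNorm' (ennrealSqPow p q (x n)) (p / q) volume :=
        eLpNorm'_tsum_le (fun n => (measurable_ennrealSqPow p q (x n)).aemeasurable)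
          ((one_le_div hq0).2 hqp)
    _ = ∑' n, ENNReal.ofReal (fpqNorm p q (x n) ^ q) :=
        tsum_congr fun n => (ofReal_fpqNorm_rpow_eq_eLpNorm' hq0 hp0 (hmem1 n) (hmem2 n)).symm
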